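/- arXiv:2508.10348 — 11 statements merged into one kernel-verified Lean document; each statement's English description precedes it below -/
import Mathlib

section
/- Let (K,X) be a supercharacter theory on a finite abelian group G, and let S and S' both be symmetric subsets of G that are unions of classes of K. If for every index i there exists a character χ ∈ X_i with Σ_{s∈S} χ(s) = Σ_{s∈S'} χ(s) (i.e. the two super-Cayley graphs Γ(G,S) and Γ(G,S') have the same eigenvalue λ_i for each i), then S = S'. In other words, once an indexing of the superclasses is fixed, a super-Cayley graph is determined by its spectrum. -/
/-- A supercharacter theory `(𝒦, 𝒳)` on a finite abelian group `G`, with `m` classes: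
`𝒦` is a partition of `G` with `{0}` a class, `𝒳` is a partition of the set of all
characters of `G` (so `|𝒳| = |𝒦| = m`), each `σ_i = Σ_{χ ∈ X_i} χ` is constant on every
class `K_j`, and each `Ω_j(χ) = Σ_{k ∈ K_j} χ(k)` takes the same value for all `χ` in a
given class `X_i`. -/
structure SuperCharTheory (G : Type*) [AddCommGroup G] [Fintype G] [DecidableEq G]
    (m : ℕ) where
  K : Fin m → Finset G
  X : Fin m → Finset (AddChar G ℂ)
  nonempty_K : ∀ i, (K i).Nonempty
  nonempty_X : ∀ i, (X i).Nonempty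
  partition_K : ∀ g : G, ∃! i, g ∈ K i
  partition_X : ∀ χ : AddChar G ℂ, ∃! i, χ ∈ X i
  zero_class : ∃ i, K i = {0}
  sigma_const : ∀ i j : Fin m, ∀ g ∈ K j, ∀ h ∈ K j,
    (∑ χ ∈ X i, χ g) = ∑ χ ∈ X i, χ h
  omega_const : ∀ i j : Fin m, ∀ χ ∈ X i, ∀ ψ ∈ X i,
    (∑ k ∈ K j, χ k) = ∑ k ∈ K j, ψ k

/-- Let `S` and `S'` be symmetric subsets of `G`, both unions of classes
of `𝒦`. If for every index `i` there is a character `χ ∈ X_i` with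
`Σ_{s∈S} χ(s) = Σ_{s∈S'} χ(s)` (i.e. the two super-Cayley graphs have the same eigenvalue
`λ_i` for each `i`), then `S = S'`: once an indexing of the superclasses is fixed, a
super-Cayley graph is determined by its spectrum. -/
theorem stmt3 {G : Type*} [AddCommGroup G] [Fintype G] [DecidableEq G] {m : ℕ}
    (T : SuperCharTheory G m) (S S' : Finset G)
    (hSsymm : ∀ s ∈ S, -s ∈ S) (hS0 : (0 : G) ∉ S)
    (hSunion : ∃ J : Finset (Fin m), S = J.biUnion T.K)
    (hS'symm : ∀ s ∈ S', -s ∈ S') (hS'0 : (0 : G) ∉ S')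
    (hS'union : ∃ J : Finset (Fin m), S' = J.biUnion T.K)
    (heig : ∀ i : Fin m, ∃ χ ∈ T.X i, ∑ s ∈ S, χ s = ∑ s ∈ S', χ s) :
    S = S' := by
  classical
  -- Step 1: sums over a union of classes are constant on each character class
  have key : ∀ (U : Finset G), (∃ J : Finset (Fin m), U = J.biUnion T.K) →
      ∀ i : Fin m, ∀ χ ∈ T.X i, ∀ ψ ∈ T.X i,
      (∑ s ∈ U, χ s) = ∑ s ∈ U, ψ s := by
    rintro U ⟨J, rfl⟩ i χ hχ ψ hψ
    have hdisj : (↑J : Set (Fin m)).PairwiseDisjoint T.K := by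
      intro a _ b _ hab
      refine Finset.disjoint_left.2 fun g hga hgb => hab ?_
      obtain ⟨c, _, hc⟩ := T.partition_K g
      rw [hc a hga, hc b hgb]
    rw [Finset.sum_biUnion hdisj, Finset.sum_biUnion hdisj]
    exact Finset.sum_congr rfl fun j _ => T.omega_const i j χ hχ ψ hψ
  -- Step 2: equality of character sums for ALL characters
  have hall : ∀ χ : AddChar G ℂ, (∑ s ∈ S, χ s) = ∑ s ∈ S', χ s := by
    intro χ
    obtain ⟨i, hi, _⟩ := T.partition_X χ
    obtain ⟨ψ, hψ, hψeq⟩ := heig i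
    calc (∑ s ∈ S, χ s) = ∑ s ∈ S, ψ s := key S hSunion i χ hi ψ hψ
      _ = ∑ s ∈ S', ψ s := hψeq
      _ = ∑ s ∈ S', χ s := key S' hS'union i ψ hψ χ hi
  -- Step 3: Fourier inversion
  have inv : ∀ (U : Finset G) (g : G),
      (∑ χ : AddChar G ℂ, (∑ s ∈ U, χ s) * χ (-g)) =
        if g ∈ U then (Fintype.card G : ℂ) else 0 := by
    intro U g
    have : ∀ χ : AddChar G ℂ, (∑ s ∈ U, χ s) * χ (-g) = ∑ s ∈ U, χ (s - g) := by
      intro χ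
      rw [Finset.sum_mul]
      exact Finset.sum_congr rfl fun s _ => by
        rw [sub_eq_add_neg, AddChar.map_add_eq_mul]
    simp_rw [this]
    rw [Finset.sum_comm]
    have : ∀ s ∈ U, (∑ χ : AddChar G ℂ, χ (s - g)) =
        if s = g then (Fintype.card G : ℂ) else 0 := by
      intro s _
      simp [AddChar.sum_apply_eq_ite, sub_eq_zero]
    rw [Finset.sum_congr rfl this, Finset.sum_ite_eq' U g]
  have card_ne : (Fintype.card G : ℂ) ≠ 0 := Nat.cast_ne_zero.2 Fintype.card_ne_zero
  ext g
  have h1 := inv S g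
  have h2 := inv S' g
  rw [show (∑ χ : AddChar G ℂ, (∑ s ∈ S, χ s) * χ (-g)) =
      ∑ χ : AddChar G ℂ, (∑ s ∈ S', χ s) * χ (-g) from
    Finset.sum_congr rfl fun χ _ => by rw [hall χ], h2] at h1
  constructor <;> intro h
  · by_contra h'
    rw [if_pos h, if_neg h'] at h1
    exact card_ne h1.symm
  · by_contra h'
    rw [if_neg h', if_pos h] at h1
    exact card_ne h1
end

section
/- Let Γ(R,S) be a U-unitary Cayley graph over a nontrivial finite commutative ring R, and suppose the Cayley graph Γ(R,U) (with generating set the subgroup U itself) is connected. Then Γ(R,S) is connected if and only if the ideal of R generated by S is all of R (equivalently, R = Σ_i I_i, the sum taken over those U-orbits K_i meeting S, where I_i is the ideal generated by any element of K_i). -/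
open Pointwise

/-- The Cayley graph of a subset `S` of an additive group: distinct `x, y` are adjacent
iff `x - y ∈ S` (for a symmetric `S` this coincides with the usual definition). -/
def cayleyGraph {G : Type*} [AddCommGroup G] (S : Set G) : SimpleGraph G :=
  SimpleGraph.fromRel (fun x y => x - y ∈ S)

/-!
`Γ(R, S)` is connected iff `S` generates `R` as an additive group. When `Γ(R, U)` is connected,
the units in `U` generate `R` additively, so `US = S` makes the additive subgroup generated
by `S` closed under multiplication by all of `R`: it is the ideal generated by `S`.
-/

section CayleyGraph

variable {G : Type*} [AddCommGroup G] {S : Set G}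

theorem cayleyGraph_adj {x y : G} :
    (cayleyGraph S).Adj x y ↔ x ≠ y ∧ (x - y ∈ S ∨ y - x ∈ S) := by
  simp [cayleyGraph, SimpleGraph.fromRel_adj]

theorem cayleyGraph_reachable_add {z : G} (hz : z ∈ AddSubgroup.closure S) (x : G) :
    (cayleyGraph S).Reachable x (x + z) := by
  induction hz using AddSubgroup.closure_induction generalizing x with
  | mem s hs =>
    by_cases hs0 : s = 0
    · simp [hs0]
    · exact SimpleGraph.Adj.reachable <|
        cayleyGraph_adj.mpr ⟨by simpa using hs0, Or.inr (by simpa using hs)⟩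
  | zero => simp
  | add a b _ _ ha hb => simpa [add_assoc] using (ha x).trans (hb (x + a))
  | neg a _ ha => simpa [sub_eq_add_neg] using (ha (x - a)).symm

theorem cayleyGraph_reachable_iff {x y : G} :
    (cayleyGraph S).Reachable x y ↔ y - x ∈ AddSubgroup.closure S := by
  refine ⟨fun h => ?_, fun h => by simpa using cayleyGraph_reachable_add h x⟩
  obtain ⟨w⟩ := h
  induction w with
  | nil => simp
  | @cons a b c hab _ ih =>
    have hba : b - a ∈ AddSubgroup.closure S := by
      rcases (cayleyGraph_adj.mp hab).2 with h | h
      · simpa using (AddSubgroup.closure S).neg_mem (AddSubgroup.subset_closure h)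
      · exact AddSubgroup.subset_closure h
    simpa using (AddSubgroup.closure S).add_mem ih hba

theorem cayleyGraph_connected_iff :
    (cayleyGraph S).Connected ↔ AddSubgroup.closure S = ⊤ := by
  rw [SimpleGraph.connected_iff, eq_top_iff]
  refine ⟨fun h x _ => ?_,
    fun h => ⟨fun x y => cayleyGraph_reachable_iff.mpr (h trivial), inferInstance⟩⟩
  simpa using cayleyGraph_reachable_iff.mp (h.1 0 x)

end CayleyGraph

section Ring

variable {R : Type*} [Ring R] {S T : Set R}

theorem mul_mem_addSubgroupClosure_of_smul_subset (hT : AddSubgroup.closure T = ⊤)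
    (hTS : ∀ t ∈ T, t • S ⊆ S) (r : R) {x : R} (hx : x ∈ AddSubgroup.closure S) :
    r * x ∈ AddSubgroup.closure S := by
  have hr : r ∈ AddSubgroup.closure T := hT ▸ trivial
  induction hr using AddSubgroup.closure_induction with
  | mem t ht =>
    have hmap : (AddSubgroup.closure S).map (AddMonoidHom.mulLeft t) ≤ AddSubgroup.closure S := by
      rw [AddMonoidHom.map_closure]
      exact AddSubgroup.closure_mono (hTS t ht)
    exact hmap ⟨x, hx, rfl⟩
  | zero => simp
  | add a b _ _ ha hb => simpa [add_mul] using add_mem ha hb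
  | neg a _ ha => simpa using neg_mem ha

theorem Ideal.span_toAddSubgroup_eq_closure_of_smul_subset (hT : AddSubgroup.closure T = ⊤)
    (hTS : ∀ t ∈ T, t • S ⊆ S) :
    (Ideal.span S).toAddSubgroup = AddSubgroup.closure S := by
  refine le_antisymm (fun x hx => ?_) (AddSubgroup.closure_le _ |>.mpr Ideal.subset_span)
  induction hx using Submodule.span_induction with
  | mem s hs => exact AddSubgroup.subset_closure hs
  | zero => exact zero_mem _
  | add a b _ _ ha hb => exact add_mem ha hb
  | smul r a _ ha => exact mul_mem_addSubgroupClosure_of_smul_subset hT hTS r ha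

end Ring

theorem stmt5_general {R : Type*} [CommRing R]
    (U : Subgroup Rˣ)
    (S : Set R)
    (hstable : ∀ u ∈ U, (u : R) • S = S)
    (hconnU : (cayleyGraph ((fun u : Rˣ => (u : R)) '' (U : Set Rˣ))).Connected) :
    (cayleyGraph S).Connected ↔ Ideal.span S = ⊤ := by
  have hUS : ∀ t ∈ (fun u : Rˣ => (u : R)) '' (U : Set Rˣ), t • S ⊆ S := by
    rintro _ ⟨u, hu, rfl⟩
    exact (hstable u hu).subset
  rw [cayleyGraph_connected_iff, ← Submodule.toAddSubgroup_inj, Submodule.top_toAddSubgroup,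
    Ideal.span_toAddSubgroup_eq_closure_of_smul_subset (cayleyGraph_connected_iff.mp hconnU) hUS]

/-- Let `Γ(R,S)` be a `U`-unitary Cayley graph over a nontrivial finite
commutative ring `R`, and suppose the Cayley graph `Γ(R,U)` is connected. Then `Γ(R,S)`
is connected iff the ideal of `R` generated by `S` is all of `R`. -/
theorem stmt5 {R : Type*} [CommRing R] [Fintype R] [Nontrivial R]
    (U : Subgroup Rˣ) (hU : (-1 : Rˣ) ∈ U)
    (S : Set R) (hSsymm : ∀ s ∈ S, -s ∈ S) (hS0 : (0 : R) ∉ S)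
    (hstable : ∀ u ∈ U, (u : R) • S = S)
    (hconnU : (cayleyGraph ((fun u : Rˣ => (u : R)) '' (U : Set Rˣ))).Connected) :
    (cayleyGraph S).Connected ↔ Ideal.span S = ⊤ :=
  stmt5_general U S hstable hconnU
end

section
/- Let Γ(R,S) be a U-unitary Cayley graph, let I be an ideal of R whose underlying set is a homogeneous set in Γ(R,S), and let K be any orbit of U acting on R by multiplication. Then: (1) if K ⊆ S and K is not contained in I, then K + I ⊆ S; (2) if K ∩ S = ∅ and K is not contained in I, then (K + I) ∩ S = ∅. Conversely, if an ideal I of R satisfies conditions (1) and (2) for every U-orbit K, then the underlying set of I is a homogeneous set in Γ(R,S). -/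
open Pointwise

/-- A set `X` of vertices of a graph is homogeneous if every vertex outside `X` is
adjacent either to all vertices of `X` or to none of them. -/
def IsHomogeneous {V : Type*} (G : SimpleGraph V) (X : Set V) : Prop :=
  ∀ v ∉ X, (∀ x ∈ X, G.Adj v x) ∨ (∀ x ∈ X, ¬ G.Adj v x)

/-- The orbit `Uy = {uy : u ∈ U}` of `y ∈ R` under a subgroup `U` of `Rˣ` acting on `R`
by multiplication. -/
def orbitU {R : Type*} [CommRing R] (U : Subgroup Rˣ) (y : R) : Set R :=
  (fun u : Rˣ => (u : R) * y) '' (U : Set Rˣ)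

/-- The two conditions of Statement 7, for every `U`-orbit `K`:
(1) if `K ⊆ S` and `K ⊄ I` then `K + I ⊆ S`;
(2) if `K ∩ S = ∅` and `K ⊄ I` then `(K + I) ∩ S = ∅`. -/
def OrbitConds {R : Type*} [CommRing R] (U : Subgroup Rˣ) (S : Set R) (I : Ideal R) :
    Prop :=
  ∀ y : R,
    (orbitU U y ⊆ S → ¬ orbitU U y ⊆ (I : Set R) → orbitU U y + (I : Set R) ⊆ S) ∧
    (orbitU U y ∩ S = ∅ → ¬ orbitU U y ⊆ (I : Set R) →
      (orbitU U y + (I : Set R)) ∩ S = ∅)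

/-- Let `Γ(R,S)` be a `U`-unitary Cayley graph and `I` an ideal of `R`
whose underlying set is homogeneous in `Γ(R,S)`. Then for every `U`-orbit `K`:
(1) if `K ⊆ S` and `K ⊄ I`, then `K + I ⊆ S`; (2) if `K ∩ S = ∅` and `K ⊄ I`, then
`(K + I) ∩ S = ∅`. Conversely, if an ideal `I` satisfies (1) and (2) for every `U`-orbit,
then `I` is a homogeneous set in `Γ(R,S)`. -/
theorem stmt7 {R : Type*} [CommRing R] [Fintype R]
    (U : Subgroup Rˣ) (hU : (-1 : Rˣ) ∈ U)
    (S : Set R) (hSsymm : ∀ s ∈ S, -s ∈ S) (hS0 : (0 : R) ∉ S)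
    (hstable : ∀ u ∈ U, (u : R) • S = S)
    (I : Ideal R) :
    (IsHomogeneous (cayleyGraph S) (I : Set R) → OrbitConds U S I) ∧
    (OrbitConds U S I → IsHomogeneous (cayleyGraph S) (I : Set R)) := by
  have hadj : ∀ x y : R, (cayleyGraph S).Adj x y ↔ x - y ∈ S := by
    intro x y
    simp only [cayleyGraph, SimpleGraph.fromRel_adj]
    constructor
    · rintro ⟨hne, h | h⟩
      · exact h
      · have := hSsymm _ h; rwa [neg_sub] at this
    · intro h
      refine ⟨?_, Or.inl h⟩
      rintro rfl
      rw [sub_self] at h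
      exact hS0 h
  -- orbit membership in I iff y ∈ I
  have horbI : ∀ y : R, ∀ u : Rˣ, ((u : R) * y ∈ I ↔ y ∈ I) := by
    intro y u
    constructor
    · intro h
      have := I.mul_mem_left ((u⁻¹ : Rˣ) : R) h
      rwa [← mul_assoc, ← Units.val_mul, inv_mul_cancel, Units.val_one, one_mul] at this
    · exact fun h => I.mul_mem_left _ h
  constructor
  · intro hhom y
    constructor
    · rintro hKS hKI s ⟨a, ha, m, hm, rfl⟩
      obtain ⟨u, hu, rfl⟩ := ha
      have hyI : y ∉ I := by
        intro hy
        exact hKI (by rintro _ ⟨v, hv, rfl⟩; exact I.mul_mem_left _ hy)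
      have hvI : (u : R) * y ∉ I := fun h => hyI ((horbI y u).mp h)
      rcases hhom _ hvI with h | h
      · have := h (-m) (I.neg_mem hm)
        rw [hadj, sub_neg_eq_add] at this
        exact this
      · exfalso
        have h0 := h 0 I.zero_mem
        rw [hadj, sub_zero] at h0
        exact h0 (hKS ⟨u, hu, rfl⟩)
    · rintro hKS hKI
      rw [Set.eq_empty_iff_forall_notMem]
      rintro s ⟨⟨a, ⟨u, hu, rfl⟩, m, hm, rfl⟩, hsS⟩
      have hyI : y ∉ I := by
        intro hy
        exact hKI (by rintro _ ⟨v, hv, rfl⟩; exact I.mul_mem_left _ hy)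
      have hvI : (u : R) * y ∉ I := fun h => hyI ((horbI y u).mp h)
      rcases hhom _ hvI with h | h
      · have h0 := h 0 I.zero_mem
        rw [hadj, sub_zero] at h0
        have : ((u : R) * y) ∈ orbitU U y ∩ S := ⟨⟨u, hu, rfl⟩, h0⟩
        rw [hKS] at this; exact this
      · have := h (-m) (I.neg_mem hm)
        rw [hadj, sub_neg_eq_add] at this
        exact this hsS
  · intro hc v hv
    have hvK : v ∈ orbitU U v := ⟨1, U.one_mem, one_mul v⟩
    have hKI : ¬ orbitU U v ⊆ (I : Set R) := fun h => hv (h hvK)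
    by_cases hvS : v ∈ S
    · left
      intro x hx
      have hKS : orbitU U v ⊆ S := by
        rintro _ ⟨u, hu, rfl⟩
        rw [← hstable u hu]
        exact ⟨v, hvS, rfl⟩
      have := (hc v).1 hKS hKI
      have hmem : v - x ∈ orbitU U v + (I : Set R) :=
        ⟨v, hvK, -x, I.neg_mem hx, by ring⟩
      rw [hadj]
      exact this hmem
    · right
      intro x hx
      have hKS : orbitU U v ∩ S = ∅ := by
        rw [Set.eq_empty_iff_forall_notMem]
        rintro s ⟨⟨u, hu, rfl⟩, hs⟩
        apply hvS
        have hst := hstable (u⁻¹) (U.inv_mem hu)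
        rw [← hst]
        refine ⟨(u : R) * v, hs, ?_⟩
        show ((u⁻¹ : Rˣ) : R) * ((u : R) * v) = v
        rw [← mul_assoc, ← Units.val_mul, inv_mul_cancel, Units.val_one, one_mul]
      have hemp := (hc v).2 hKS hKI
      rw [hadj]
      intro hS
      have : v - x ∈ (orbitU U v + (I : Set R)) ∩ S :=
        ⟨⟨v, hvK, -x, I.neg_mem hx, by ring⟩, hS⟩
      rw [hemp] at this
      exact this
end

section
/- Let R be a nontrivial finite commutative ring, U a subgroup of Rˣ with -1 ∈ U, and let I be a proper ideal of R (I ≠ R) whose underlying set is a homogeneous set in the Cayley graph Γ(R,U). Then I + U = U (so u + m ∈ U for all u ∈ U and m ∈ I), and I is a nilpotent ideal of R, i.e. I^N = 0 for some positive integer N. -/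
open Pointwise

/-- Let `R` be a nontrivial finite commutative ring, `U` a subgroup of
`Rˣ` with `-1 ∈ U`, and `I` a proper ideal of `R` whose underlying set is homogeneous in
the Cayley graph `Γ(R,U)`. Then `I + U = U` (so `u + m ∈ U` for all `u ∈ U`, `m ∈ I`),
and `I` is a nilpotent ideal: `I^N = 0` for some positive integer `N`. -/
theorem stmt8 {R : Type*} [CommRing R] [Fintype R] [Nontrivial R]
    (U : Subgroup Rˣ) (hU : (-1 : Rˣ) ∈ U)
    (I : Ideal R) (hI : I ≠ ⊤)
    (hhom : IsHomogeneous (cayleyGraph ((fun u : Rˣ => (u : R)) '' (U : Set Rˣ)))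
      (I : Set R)) :
    (I : Set R) + ((fun u : Rˣ => (u : R)) '' (U : Set Rˣ)) =
        (fun u : Rˣ => (u : R)) '' (U : Set Rˣ) ∧
      ∃ N : ℕ, 0 < N ∧ I ^ N = ⊥ := by
  classical
  set S : Set R := (fun u : Rˣ => (u : R)) '' (U : Set Rˣ) with hS
  -- symmetry of S
  have hsymm : ∀ x ∈ S, -x ∈ S := by
    rintro x ⟨v, hv, rfl⟩
    exact ⟨-v, by simpa using U.mul_mem hU hv, by simp⟩
  -- key: m ∈ I, u ∈ U → u + m ∈ S
  have key : ∀ m ∈ I, ∀ u : Rˣ, u ∈ U → ((u : R) + m) ∈ S := by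
    intro m hm u hu
    have huI : (u : R) ∉ I := fun h => hI (I.eq_top_of_isUnit_mem h u.isUnit)
    rcases hhom _ huI with h | h
    · have hadj := h (-m) (I.neg_mem hm)
      rcases hadj with ⟨hne, hin | hin⟩
      · simpa [sub_neg_eq_add] using hin
      · have : -((u : R) + m) ∈ S := by
          have : (-m : R) - u ∈ S := hin
          simpa [sub_eq_add_neg, add_comm, neg_add] using this
        simpa using hsymm _ this
    · exfalso
      apply h 0 I.zero_mem
      refine ⟨?_, Or.inl ?_⟩
      · exact u.ne_zero
      · simpa using ⟨u, hu, rfl⟩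
  have hone : (1 : Rˣ) ∈ U := U.one_mem
  constructor
  · ext x
    constructor
    · rintro ⟨m, hm, y, hy, rfl⟩
      rcases hy with ⟨v, hv, rfl⟩
      simpa [add_comm] using key m hm v hv
    · intro hx
      exact ⟨0, I.zero_mem, x, hx, by simp⟩
  · -- I ≤ jacobson ⊥
    have hle : I ≤ (⊥ : Ideal R).jacobson := by
      intro m hm
      rw [Ideal.mem_jacobson_bot]
      intro r
      have : ((1 : Rˣ) : R) + m * r ∈ S := key (m * r) (I.mul_mem_right r hm) 1 hone
      rcases this with ⟨v, hv, hveq⟩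
      have hveq' : (v : R) = 1 + m * r := by simpa using hveq
      have : m * r + 1 = (v : R) := by rw [hveq']; ring
      rw [this]
      exact v.isUnit
    have : IsArtinianRing R := inferInstance
    obtain ⟨n, hn⟩ := IsArtinianRing.isNilpotent_jacobson_bot (R := R)
    have hIn : I ^ n = ⊥ := by
      have := Ideal.pow_right_mono hle n
      rw [hn] at this
      exact le_bot_iff.mp this
    rcases Nat.eq_zero_or_pos n with rfl | hpos
    · exfalso
      simp only [pow_zero, Ideal.one_eq_top] at hIn
      exact (bot_ne_top (α := Ideal R)) hIn.symm
    · exact ⟨n, hpos, hIn⟩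
end

section
/- Let R be a finite commutative ring, U a subgroup of Rˣ, χ an additive character of R, and r_i, r_j ∈ R with U-orbits K_i = U·r_i and K_j = U·r_j (as finite subsets of R). Then |K_i| · Σ_{x∈K_j} χ(x·r_i) = |K_j| · Σ_{x∈K_i} χ(x·r_j). -/
private lemma stmt10_key {R : Type*} [CommRing R] (U : Subgroup Rˣ) (χ : AddChar R ℂ)
    (r s : R) (K : Finset R) (hK : ∀ x : R, x ∈ K ↔ ∃ u ∈ U, (u : R) * s = x)
    (u : Rˣ) (hu : u ∈ U) :
    ∑ x ∈ K, χ (x * ((u : R) * r)) = ∑ x ∈ K, χ (x * r) := by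
  apply Finset.sum_nbij' (i := fun x => (u : R) * x) (j := fun x => ((u⁻¹ : Rˣ) : R) * x)
  · intro x hx
    obtain ⟨v, hv, rfl⟩ := (hK x).1 hx
    exact (hK _).2 ⟨u * v, U.mul_mem hu hv, by push_cast; ring⟩
  · intro x hx
    obtain ⟨v, hv, rfl⟩ := (hK x).1 hx
    exact (hK _).2 ⟨u⁻¹ * v, U.mul_mem (U.inv_mem hu) hv, by push_cast; ring⟩
  · intro x _
    calc ((u⁻¹ : Rˣ) : R) * ((u : R) * x) = (((u⁻¹ * u : Rˣ)) : R) * x := by push_cast; ring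
    _ = x := by simp
  · intro x _
    calc (u : R) * (((u⁻¹ : Rˣ) : R) * x) = (((u * u⁻¹ : Rˣ)) : R) * x := by push_cast; ring
    _ = x := by simp
  · intro x _
    congr 1
    ring

/-- Let `R` be a finite commutative ring, `U` a subgroup of `Rˣ`, `χ`
an additive character of `R`, and `r_i, r_j ∈ R` with `U`-orbits `K_i = U·r_i`,
`K_j = U·r_j` (as finite subsets of `R`). Then
`|K_i| · Σ_{x∈K_j} χ(x·r_i) = |K_j| · Σ_{x∈K_i} χ(x·r_j)`. -/
theorem stmt10 {R : Type*} [CommRing R] [Fintype R]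
    (U : Subgroup Rˣ) (χ : AddChar R ℂ) (ri rj : R)
    (Ki Kj : Finset R)
    (hKi : ∀ x : R, x ∈ Ki ↔ ∃ u ∈ U, (u : R) * ri = x)
    (hKj : ∀ x : R, x ∈ Kj ↔ ∃ u ∈ U, (u : R) * rj = x) :
    (Ki.card : ℂ) * ∑ x ∈ Kj, χ (x * ri) = (Kj.card : ℂ) * ∑ x ∈ Ki, χ (x * rj) := by
  have hc1 : ∀ y ∈ Ki, ∑ x ∈ Kj, χ (x * y) = ∑ x ∈ Kj, χ (x * ri) := by
    intro y hy
    obtain ⟨u, hu, rfl⟩ := (hKi y).1 hy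
    exact stmt10_key U χ ri rj Kj hKj u hu
  have h1 : (Ki.card : ℂ) * ∑ x ∈ Kj, χ (x * ri) = ∑ y ∈ Ki, ∑ x ∈ Kj, χ (x * y) := by
    rw [Finset.sum_congr rfl hc1, Finset.sum_const, nsmul_eq_mul]
  have hc2 : ∀ y ∈ Kj, ∑ x ∈ Ki, χ (x * y) = ∑ x ∈ Ki, χ (x * rj) := by
    intro y hy
    obtain ⟨u, hu, rfl⟩ := (hKj y).1 hy
    exact stmt10_key U χ rj ri Ki hKi u hu
  have h2 : (Kj.card : ℂ) * ∑ x ∈ Ki, χ (x * rj) = ∑ y ∈ Kj, ∑ x ∈ Ki, χ (x * y) := by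
    rw [Finset.sum_congr rfl hc2, Finset.sum_const, nsmul_eq_mul]
  rw [h1, h2, Finset.sum_comm]
  simp_rw [mul_comm]
end

section
/- Let R be a finite commutative ring and n a positive integer with n·1_R = 0. Let S be a symmetric subset of R such that for every integer k coprime to n, the image of S under the map x ↦ k·x (integer scalar multiplication) equals S. Then for every additive character χ of R, the sum Σ_{s∈S} χ(s) is a rational integer; consequently every eigenvalue of the Cayley graph Γ(R,S) is an integer, i.e. Γ(R,S) is an integral graph. -/
/-! The values of an additive character `χ` of `R` are `n`-th roots of unity, since `n • s = 0`.
Realised inside the cyclotomic field `ℚ(ζₙ)`, they are permuted by each Galois automorphism as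
`y ↦ y ^ m` for a single `m` coprime to `n`; as `χ s ^ m = χ (m • s)` and multiplication by `m`
permutes `S`, the sum `∑ s ∈ S, χ s` is Galois invariant, hence rational. Being a sum of roots of
unity it is also an algebraic integer, hence an integer. -/

theorem Finset.sum_comp_eq_of_image_eq {α β : Type*} [DecidableEq α] [AddCommMonoid β]
    {s : Finset α} {g : α → α} (h : s.image g = s) (f : α → β) :
    ∑ a ∈ s, f (g a) = ∑ a ∈ s, f a := by
  have hinj : Set.InjOn g s := Finset.injOn_of_card_image_eq (by rw [h])
  conv_rhs => rw [← h]
  exact (Finset.sum_image hinj).symm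

theorem IsPrimitiveRoot.exists_coprime_forall_algEquiv_apply_eq_pow {K L : Type*} [CommRing K]
    [CommRing L] [IsDomain L] [Algebra K L] {ζ : L} {n : ℕ} [NeZero n]
    (hζ : IsPrimitiveRoot ζ n) (σ : L ≃ₐ[K] L) :
    ∃ m : ℕ, m.Coprime n ∧ ∀ y : L, y ^ n = 1 → σ y = y ^ m := by
  refine ⟨(hζ.autToPow K σ : ZMod n).val, ZMod.val_coe_unit_coprime _, fun y hy ↦ ?_⟩
  obtain ⟨j, -, rfl⟩ := hζ.eq_pow_of_pow_eq_one hy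
  rw [map_pow, ← hζ.autToPow_spec K σ, ← pow_mul, ← pow_mul, mul_comm]

theorem exists_rat_eq_sum_of_forall_coprime {K ι : Type*} [Field K] [CharZero K] [IsAlgClosed K]
    {n : ℕ} [NeZero n] (s : Finset ι) (x : ι → K) (hx : ∀ i, x i ^ n = 1)
    (hinv : ∀ m : ℕ, m.Coprime n → ∑ i ∈ s, x i ^ m = ∑ i ∈ s, x i) :
    ∃ q : ℚ, ∑ i ∈ s, x i = q := by
  let L := CyclotomicField n ℚ
  have : IsCyclotomicExtension {n} ℚ L := CyclotomicField.isCyclotomicExtension n ℚ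
  have := IsCyclotomicExtension.finiteDimensional {n} ℚ L
  have := IsCyclotomicExtension.isGalois {n} ℚ L
  let φ : L →ₐ[ℚ] K := IsAlgClosed.lift
  have hζ := IsCyclotomicExtension.zeta_spec n ℚ L
  obtain ⟨y, hy, hφy⟩ : ∃ y : ι → L, (∀ i, y i ^ n = 1) ∧ ∀ i, φ (y i) = x i := by
    choose j _ hj using fun i ↦
      (hζ.map_of_injective (f := φ) φ.injective).eq_pow_of_pow_eq_one (hx i)
    exact ⟨fun i ↦ _ ^ j i, fun i ↦ by rw [← pow_mul, mul_comm, pow_mul, hζ.pow_eq_one, one_pow],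
      fun i ↦ by rw [map_pow, hj]⟩
  have hφsum : φ (∑ i ∈ s, y i) = ∑ i ∈ s, x i := by simp only [map_sum, hφy]
  have hfixed (σ : L ≃ₐ[ℚ] L) : σ (∑ i ∈ s, y i) = ∑ i ∈ s, y i := by
    obtain ⟨m, hm, hσ⟩ := hζ.exists_coprime_forall_algEquiv_apply_eq_pow σ
    refine φ.injective (?_ : φ _ = φ _)
    simp only [hφsum, map_sum, hσ _ (hy _), map_pow, hφy, hinv m hm]
  obtain ⟨q, hq⟩ := IntermediateField.mem_bot.mp ((IsGalois.mem_bot_iff_fixed _).mpr hfixed)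
  exact ⟨q, by rw [← hφsum, ← hq, AlgHom.commutes, eq_ratCast]⟩

theorem exists_int_eq_of_isIntegral_ratCast {K : Type*} [Field K] [CharZero K] {q : ℚ}
    (h : IsIntegral ℤ (q : K)) : ∃ z : ℤ, (q : K) = z := by
  rw [← eq_ratCast (algebraMap ℚ K), isIntegral_algebraMap_iff (algebraMap ℚ K).injective,
    IsIntegrallyClosed.isIntegral_iff] at h
  obtain ⟨z, rfl⟩ := h
  exact ⟨z, by simp⟩

theorem exists_int_eq_sum_of_forall_coprime {K ι : Type*} [Field K] [CharZero K] [IsAlgClosed K]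
    {n : ℕ} [NeZero n] (s : Finset ι) (x : ι → K) (hx : ∀ i, x i ^ n = 1)
    (hinv : ∀ m : ℕ, m.Coprime n → ∑ i ∈ s, x i ^ m = ∑ i ∈ s, x i) :
    ∃ z : ℤ, ∑ i ∈ s, x i = z := by
  obtain ⟨q, hq⟩ := exists_rat_eq_sum_of_forall_coprime s x hx hinv
  have hint : IsIntegral ℤ (∑ i ∈ s, x i) := IsIntegral.sum _ fun i _ ↦
    IsIntegral.of_pow (NeZero.pos n) (by rw [hx i]; exact isIntegral_one)
  rw [hq] at hint ⊢
  exact exists_int_eq_of_isIntegral_ratCast hint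

theorem stmt12_general {R : Type*} [CommRing R] [DecidableEq R]
    (n : ℕ) (hn : 0 < n) (hchar : (n : R) = 0)
    (S : Finset R)
    (hstable : ∀ k : ℤ, IsCoprime k (n : ℤ) →
      Finset.image (fun x : R => k • x) S = S) :
    ∀ χ : AddChar R ℂ, ∃ z : ℤ, ∑ s ∈ S, χ s = (z : ℂ) := by
  intro χ
  have : NeZero n := .of_pos hn
  refine exists_int_eq_sum_of_forall_coprime (n := n) S χ (fun s ↦ ?_) (fun m hm ↦ ?_)
  · rw [← AddChar.map_nsmul_eq_pow, nsmul_eq_mul, hchar, zero_mul, AddChar.map_zero_eq_one]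
  · have himage := hstable m (Nat.isCoprime_iff_coprime.mpr hm)
    simp only [← AddChar.map_nsmul_eq_pow, ← natCast_zsmul]
    exact Finset.sum_comp_eq_of_image_eq himage χ

/-- Let `R` be a finite commutative ring and `n` a positive integer
with `n·1_R = 0`. Let `S` be a symmetric subset of `R` such that for every integer `k`
coprime to `n`, the image of `S` under `x ↦ k·x` equals `S`. Then for every additive
character `χ` of `R`, the sum `Σ_{s∈S} χ(s)` is a rational integer; hence every
eigenvalue of the Cayley graph `Γ(R,S)` is an integer, i.e. `Γ(R,S)` is integral. -/
theorem stmt12 {R : Type*} [CommRing R] [Fintype R] [DecidableEq R]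
    (n : ℕ) (hn : 0 < n) (hchar : (n : R) = 0)
    (S : Finset R) (hSsymm : ∀ s ∈ S, -s ∈ S) (hS0 : (0 : R) ∉ S)
    (hstable : ∀ k : ℤ, IsCoprime k (n : ℤ) →
      Finset.image (fun x : R => k • x) S = S) :
    ∀ χ : AddChar R ℂ, ∃ z : ℤ, ∑ s ∈ S, χ s = (z : ℂ) :=
  stmt12_general n hn hchar S hstable
end

section
/- Let R be a finite commutative ring, n a positive integer with n·1_R = 0, and χ a non-degenerate additive character of R (so that r ↦ χ_r is injective). Let H be a subgroup of (ℤ/n)ˣ and let T be a symmetric subset of R. Then the following are equivalent: (1) for every integer a whose residue class mod n lies in H and every r ∈ R, Σ_{t∈T} χ(a·r·t) = Σ_{t∈T} χ(r·t) (i.e. all eigenvalues of Γ(R,T) are fixed by the Galois automorphisms of ℚ(ζ_n) corresponding to H, so Γ(R,T) is K-rational for K = ℚ(ζ_n)^H); (2) for every integer a whose residue class mod n lies in H, the image of T under x ↦ a·x equals T (i.e. Γ(R,T) is U₁-unitary, where U₁ is the image of H in Rˣ). -/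
/-!
A non-degenerate character is primitive, so by orthogonality a finite set `S ⊆ R` is recovered
from its character sums `r ↦ Σ_{s∈S} χ(r s)` (Fourier inversion of its indicator). Since
`n · 1_R = 0`, an integer `a` whose class is a unit mod `n` acts on `R` as a unit, so
`x ↦ a x` is injective and the character sums of `a T` are the twisted sums
`r ↦ Σ_{t∈T} χ(a r t)`. Condition (1) thus says that `a T` and `T` have the same character sums.
-/

open Finset

namespace AddChar

variable {R R' : Type*} [CommRing R]

theorem isPrimitive_of_forall_ideal_eq_bot [CommMonoid R'] {ψ : AddChar R R'}
    (hψ : ∀ I : Ideal R, (∀ x ∈ I, ψ x = 1) → I = ⊥) : ψ.IsPrimitive := by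
  intro a ha hshift
  have hker : ∀ x ∈ Ideal.span {a}, ψ x = 1 := by
    intro x hx
    obtain ⟨c, rfl⟩ := Ideal.mem_span_singleton'.mp hx
    simpa [mul_comm] using DFunLike.congr_fun hshift c
  exact ha (by simpa using hψ _ hker)

theorem sum_image_zsmul [DecidableEq R] [CommSemiring R'] (ψ : AddChar R R') {a : ℤ}
    (ha : IsUnit (a : R)) (T : Finset R) (r : R) :
    ∑ s ∈ T.image (fun x : R => a • x), ψ (r * s) = ∑ t ∈ T, ψ (a • (r * t)) := by
  have hinj : Set.InjOn (fun x : R => a • x) T := fun x _ y _ hxy => by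
    simpa only [zsmul_eq_mul, ha.mul_right_inj] using hxy
  rw [sum_image hinj]
  simp_rw [mul_smul_comm]

variable [Fintype R] [DecidableEq R] [CommRing R'] [IsDomain R']

theorem IsPrimitive.sum_mul_sum_finset {ψ : AddChar R R'} (hψ : ψ.IsPrimitive)
    (S : Finset R) (x : R) :
    ∑ r : R, ψ (-(r * x)) * ∑ s ∈ S, ψ (r * s) = if x ∈ S then (Fintype.card R : R') else 0 := by
  have hterm : ∀ r s, ψ (-(r * x)) * ψ (r * s) = ψ (r * (s - x)) := fun r s => by
    rw [← map_add_eq_mul]; ring_nf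
  simp_rw [mul_sum, hterm]
  rw [sum_comm]
  simp_rw [sum_mulShift _ hψ, sub_eq_zero]
  simp [sum_ite_eq']

theorem IsPrimitive.finset_eq_of_sum_mul_eq [CharZero R'] {ψ : AddChar R R'}
    (hψ : ψ.IsPrimitive) {S S' : Finset R}
    (h : ∀ r, ∑ s ∈ S, ψ (r * s) = ∑ s ∈ S', ψ (r * s)) : S = S' := by
  ext x
  have hinv := hψ.sum_mul_sum_finset S x
  simp_rw [h, hψ.sum_mul_sum_finset S' x] at hinv
  have hcard : (Fintype.card R : R') ≠ 0 := Nat.cast_ne_zero.mpr Fintype.card_ne_zero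
  by_cases hx : x ∈ S <;> by_cases hx' : x ∈ S' <;> simp_all

end AddChar

theorem isUnit_intCast_of_isUnit_zmod {R : Type*} [Ring R] {n : ℕ} (hn : (n : R) = 0) {a : ℤ}
    (ha : IsUnit (a : ZMod n)) : IsUnit (a : R) := by
  simpa using ha.map (ZMod.castHom (ringChar.dvd hn) R)

theorem stmt13_general {R : Type*} [CommRing R] [Fintype R] [DecidableEq R]
    (n : ℕ) (hchar : (n : R) = 0)
    (χ : AddChar R ℂ)
    (hnd : ∀ I : Ideal R, (∀ x ∈ I, χ x = 1) → I = ⊥)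
    (H : Subgroup (ZMod n)ˣ)
    (T : Finset R) :
    (∀ a : ℤ, (∃ h ∈ H, ((h : (ZMod n)ˣ) : ZMod n) = (a : ZMod n)) →
        ∀ r : R, ∑ t ∈ T, χ (a • (r * t)) = ∑ t ∈ T, χ (r * t)) ↔
      (∀ a : ℤ, (∃ h ∈ H, ((h : (ZMod n)ˣ) : ZMod n) = (a : ZMod n)) →
        Finset.image (fun x : R => a • x) T = T) := by
  have hχ : χ.IsPrimitive := AddChar.isPrimitive_of_forall_ideal_eq_bot hnd
  have hunit : ∀ a : ℤ, (∃ h ∈ H, ((h : (ZMod n)ˣ) : ZMod n) = (a : ZMod n)) →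
      IsUnit (a : R) := by
    rintro a ⟨h, -, hh⟩
    exact isUnit_intCast_of_isUnit_zmod hchar (hh ▸ h.isUnit)
  constructor
  · intro hsum a ha
    refine hχ.finset_eq_of_sum_mul_eq fun r => ?_
    rw [χ.sum_image_zsmul (hunit a ha), hsum a ha r]
  · intro himage a ha r
    rw [← χ.sum_image_zsmul (hunit a ha), himage a ha]

/-- Let `R` be a finite commutative ring, `n` a positive integer with
`n·1_R = 0`, and `χ` a non-degenerate additive character of `R` (its kernel contains no
nonzero ideal). Let `H` be a subgroup of `(ℤ/n)ˣ` and `T` a symmetric subset of `R`.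
Then the following are equivalent: (1) for every integer `a` whose residue class mod `n`
lies in `H` and every `r ∈ R`, `Σ_{t∈T} χ(a·r·t) = Σ_{t∈T} χ(r·t)` (all eigenvalues of
`Γ(R,T)` are fixed by the Galois automorphisms corresponding to `H`, i.e. `Γ(R,T)` is
`ℚ(ζ_n)^H`-rational); (2) for every such `a`, the image of `T` under `x ↦ a·x` equals
`T` (i.e. `Γ(R,T)` is `U₁`-unitary for the image `U₁` of `H` in `Rˣ`). -/
theorem stmt13 {R : Type*} [CommRing R] [Fintype R] [DecidableEq R]
    (n : ℕ) (hn : 0 < n) (hchar : (n : R) = 0)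
    (χ : AddChar R ℂ)
    (hnd : ∀ I : Ideal R, (∀ x ∈ I, χ x = 1) → I = ⊥)
    (H : Subgroup (ZMod n)ˣ)
    (T : Finset R) (hTsymm : ∀ t ∈ T, -t ∈ T) (hT0 : (0 : R) ∉ T) :
    (∀ a : ℤ, (∃ h ∈ H, ((h : (ZMod n)ˣ) : ZMod n) = (a : ZMod n)) →
        ∀ r : R, ∑ t ∈ T, χ (a • (r * t)) = ∑ t ∈ T, χ (r * t)) ↔
      (∀ a : ℤ, (∃ h ∈ H, ((h : (ZMod n)ˣ) : ZMod n) = (a : ZMod n)) →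
        Finset.image (fun x : R => a • x) T = T) :=
  stmt13_general n hchar χ hnd H T
end

section
/- Let R be a finite commutative ring, χ a non-degenerate additive character of R, U a subgroup of Rˣ, and I a nonzero ideal of R with 1 + I ⊆ U. Then for every r ∈ R with r·I ≠ 0, the sum Σ_{u∈U} χ(r·u) equals 0. Moreover, if in addition |I| · |Ann_R(I)| = |R| (as holds in a Frobenius ring), then the number of elements r ∈ R with Σ_{u∈U} χ(r·u) = 0 is at least |R|·(1 - 1/|I|), which is at least |R|/2. -/
open scoped Classical

/-- Let `R` be a finite commutative ring, `χ` a non-degenerate additive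
character of `R`, `U` a subgroup of `Rˣ`, and `I` a nonzero ideal with `1 + I ⊆ U`. Then
for every `r ∈ R` with `r·I ≠ 0`, `Σ_{u∈U} χ(r·u) = 0`. Moreover, if in addition
`|I| · |Ann_R(I)| = |R|` (as holds in a Frobenius ring), then the number of `r ∈ R` with
`Σ_{u∈U} χ(r·u) = 0` is at least `|R|·(1 - 1/|I|)`, which is at least `|R|/2`. -/
theorem stmt15 {R : Type*} [CommRing R] [Fintype R]
    (χ : AddChar R ℂ)
    (hnd : ∀ J : Ideal R, (∀ x ∈ J, χ x = 1) → J = ⊥)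
    (U : Subgroup Rˣ) (I : Ideal R) (hI : I ≠ ⊥)
    (hIU : ∀ m ∈ I, ∃ u ∈ U, (u : R) = 1 + m) :
    (∀ r : R, (∃ m ∈ I, r * m ≠ 0) →
        ∑ u ∈ Finset.univ.filter (fun u : Rˣ => u ∈ U), χ (r * (u : R)) = 0) ∧
      ((Nat.card I * Nat.card {y : R | ∀ m ∈ I, y * m = 0} = Nat.card R) →
        ((Nat.card R : ℚ) * (1 - 1 / (Nat.card I : ℚ)) ≤
            (Nat.card {r : R //
              ∑ u ∈ Finset.univ.filter (fun u : Rˣ => u ∈ U), χ (r * (u : R)) = 0} : ℚ)) ∧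
          (Nat.card R : ℚ) / 2 ≤ (Nat.card R : ℚ) * (1 - 1 / (Nat.card I : ℚ))) := by
  set F : Finset Rˣ := Finset.univ.filter (fun u : Rˣ => u ∈ U) with hF
  -- Part 1
  have hmain : ∀ r : R, (∃ m ∈ I, r * m ≠ 0) → ∑ u ∈ F, χ (r * (u : R)) = 0 := by
    intro r hr
    -- there is m₀ ∈ I with χ (r * m₀) ≠ 1
    have hx : ∃ m₀ ∈ I, χ (r * m₀) ≠ 1 := by
      by_contra h
      push_neg at h
      have hJ : Submodule.map (LinearMap.lsmul R R r) I = ⊥ := by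
        apply hnd
        intro x hx
        obtain ⟨m, hm, hmx⟩ := Submodule.mem_map.mp hx
        have : r * m = x := by simpa [smul_eq_mul] using hmx
        rw [← this]; exact h m hm
      obtain ⟨m, hm, hrm⟩ := hr
      apply hrm
      have : r * m ∈ Submodule.map (LinearMap.lsmul R R r) I :=
        Submodule.mem_map.mpr ⟨m, hm, by simp [smul_eq_mul]⟩
      rw [hJ] at this
      simpa using this
    obtain ⟨m₀, hm₀, hχm₀⟩ := hx
    -- inner character sums vanish
    have hinner : ∀ v : Rˣ, ∑ m : I, χ (r * (v : R) * (m : R)) = 0 := by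
      intro v
      have f : ↥I →+ R := AddMonoidHom.mk' (fun m : I => r * (v : R) * (m : R))
        (by intro a b; push_cast; ring)
      set ψ : AddChar ↥I ℂ := χ.compAddMonoidHom
        (AddMonoidHom.mk' (fun m : I => r * (v : R) * (m : R))
          (by intro a b; push_cast; ring)) with hψ
      have hne : ψ ≠ 0 := by
        rw [AddChar.ne_zero_iff]
        refine ⟨⟨(v⁻¹ : Rˣ) * m₀, I.mul_mem_left _ hm₀⟩, ?_⟩
        have : r * (v : R) * ((v⁻¹ : Rˣ) * m₀) = r * m₀ := by
          have hv : (v : R) * (v⁻¹ : Rˣ) = 1 := Units.mul_inv v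
          calc r * (v : R) * ((v⁻¹ : Rˣ) * m₀) = r * ((v : R) * (v⁻¹ : Rˣ)) * m₀ := by ring
            _ = r * m₀ := by rw [hv, mul_one]
        simpa [hψ, this] using hχm₀
      have := AddChar.sum_eq_zero_iff_ne_zero.mpr hne
      simpa [hψ] using this
    -- reindexing: for each m ∈ I, the sum is invariant under u ↦ u * u₀
    have hre : ∀ m : I, ∑ u ∈ F, χ (r * (u : R)) =
        ∑ u ∈ F, χ (r * (u : R) * (1 + (m : R))) := by
      intro m
      obtain ⟨u₀, hu₀U, hu₀⟩ := hIU (m : R) m.2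
      have key : ∀ u ∈ F, χ (r * (u : R) * (1 + (m : R))) = χ (r * ((u * u₀ : Rˣ) : R)) := by
        intro u _
        rw [← hu₀]; push_cast; ring_nf
      rw [Finset.sum_congr rfl key]
      refine (Finset.sum_nbij' (fun u => u * u₀) (fun u => u * u₀⁻¹) ?_ ?_ ?_ ?_ ?_).symm
      · intro u hu
        simp only [hF, Finset.mem_filter, Finset.mem_univ, true_and] at hu ⊢
        exact U.mul_mem hu hu₀U
      · intro u hu
        simp only [hF, Finset.mem_filter, Finset.mem_univ, true_and] at hu ⊢
        exact U.mul_mem hu (U.inv_mem hu₀U)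
      · intro u _; simp [mul_assoc]
      · intro u _; simp [mul_assoc]
      · intro u _; rfl
    -- combine
    have hdouble : (Fintype.card I : ℂ) * (∑ u ∈ F, χ (r * (u : R))) = 0 := by
      calc (Fintype.card I : ℂ) * (∑ u ∈ F, χ (r * (u : R)))
          = ∑ _m : I, ∑ u ∈ F, χ (r * (u : R)) := by
            rw [Finset.sum_const, Finset.card_univ, nsmul_eq_mul]
        _ = ∑ m : I, ∑ u ∈ F, χ (r * (u : R) * (1 + (m : R))) := by
            exact Finset.sum_congr rfl fun m _ => hre m
        _ = ∑ u ∈ F, ∑ m : I, χ (r * (u : R) * (1 + (m : R))) := Finset.sum_comm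
        _ = ∑ u ∈ F, ∑ m : I, χ (r * (u : R)) * χ (r * (u : R) * (m : R)) := by
            refine Finset.sum_congr rfl fun u _ => Finset.sum_congr rfl fun m _ => ?_
            rw [← AddChar.map_add_eq_mul]; ring_nf
        _ = ∑ u ∈ F, χ (r * (u : R)) * ∑ m : I, χ (r * (u : R) * (m : R)) := by
            exact Finset.sum_congr rfl fun u _ => (Finset.mul_sum _ _ _).symm
        _ = 0 := by
            refine Finset.sum_eq_zero fun u _ => ?_
            rw [hinner u, mul_zero]
    have hne : (Fintype.card I : ℂ) ≠ 0 := by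
      exact_mod_cast Fintype.card_ne_zero
    exact (mul_eq_zero.mp hdouble).resolve_left hne
  refine ⟨hmain, ?_⟩
  intro hc
  set A : Set R := {y : R | ∀ m ∈ I, y * m = 0} with hA
  set B : Set R := {r : R | ∑ u ∈ F, χ (r * (u : R)) = 0} with hB
  have hBA : Bᶜ ⊆ A := by
    intro r hr
    intro m hm
    by_contra hrm
    exact hr (hmain r ⟨m, hm, hrm⟩)
  have hcardsplit : B.ncard + Bᶜ.ncard = Nat.card R := Set.ncard_add_ncard_compl B
  have hle : Bᶜ.ncard ≤ A.ncard := Set.ncard_le_ncard hBA (Set.toFinite A)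
  have hcB : Nat.card {r : R // ∑ u ∈ F, χ (r * (u : R)) = 0} = B.ncard := by
    rw [← Nat.card_coe_set_eq]; rfl
  have hcA : Nat.card A = A.ncard := Nat.card_coe_set_eq A
  -- |I| ≥ 2
  have hI2 : 2 ≤ Nat.card I := by
    obtain ⟨x, hxI, hx0⟩ := Submodule.exists_mem_ne_zero_of_ne_bot hI
    have : Nontrivial I := ⟨⟨⟨x, hxI⟩, 0, by simpa using hx0⟩⟩
    rw [Nat.card_eq_fintype_card]
    exact Fintype.one_lt_card_iff_nontrivial.mpr this
  have hiQ : (2 : ℚ) ≤ (Nat.card I : ℚ) := by exact_mod_cast hI2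
  have hi0 : (0 : ℚ) < (Nat.card I : ℚ) := by linarith
  rw [hcA] at hc
  have hcQ : (Nat.card I : ℚ) * (A.ncard : ℚ) = (Nat.card R : ℚ) := by exact_mod_cast hc
  have hsplitQ : (B.ncard : ℚ) + (Bᶜ.ncard : ℚ) = (Nat.card R : ℚ) := by exact_mod_cast hcardsplit
  have hleQ : (Bᶜ.ncard : ℚ) ≤ (A.ncard : ℚ) := by exact_mod_cast hle
  constructor
  · rw [hcB]
    have hn : (Nat.card R : ℚ) * (1 / (Nat.card I : ℚ)) = (A.ncard : ℚ) := by
      rw [← hcQ, mul_comm ((Nat.card I : ℚ)) _, mul_one_div, mul_div_assoc,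
        div_self (ne_of_gt hi0), mul_one]
    have heq : (Nat.card R : ℚ) * (1 - 1 / (Nat.card I : ℚ)) =
        (Nat.card R : ℚ) - (A.ncard : ℚ) := by
      rw [mul_sub, mul_one, hn]
    rw [heq]
    linarith
  · have h12 : 1 / (Nat.card I : ℚ) ≤ 1 / 2 := by
      apply one_div_le_one_div_of_le <;> linarith
    have hR0 : (0 : ℚ) ≤ (Nat.card R : ℚ) := Nat.cast_nonneg _
    nlinarith
end

section
/- Let R be a nontrivial finite commutative ring with a non-degenerate additive character χ. Suppose the unitary Cayley graph Γ(R,Rˣ) is connected and its complement graph is also connected. Then Γ(R,Rˣ) is prime if and only if 0 is not an eigenvalue of Γ(R,Rˣ), i.e. if and only if Σ_{u∈Rˣ} χ(r·u) ≠ 0 for every r ∈ R. -/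
/-- A graph is prime if it has no nontrivial homogeneous set, i.e. no homogeneous set `X`
with `2 ≤ |X|` and `X` a proper subset of the vertex set. -/
def IsPrimeGraph {V : Type*} (G : SimpleGraph V) : Prop :=
  ¬ ∃ X : Set V, 2 ≤ X.ncard ∧ X ≠ Set.univ ∧ IsHomogeneous G X

section Homogeneous

variable {V W : Type*} {G : SimpleGraph V} {H : SimpleGraph W} {X : Set V}

lemma IsHomogeneous.mem_of_adj_of_not_adj (hX : IsHomogeneous G X) {x y v : V} (hx : x ∈ X)
    (hy : y ∈ X) (hvx : G.Adj v x) (hvy : ¬ G.Adj v y) : v ∈ X := by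
  by_contra hv
  rcases hX v hv with h | h
  · exact hvy (h y hy)
  · exact h x hx hvx

lemma SimpleGraph.Preconnected.eq_univ_of_forall_not_adj (hG : G.Preconnected) {x : V}
    (hx : x ∈ X) (h : ∀ v ∉ X, ∀ y ∈ X, ¬ G.Adj v y) : X = Set.univ := by
  refine Set.eq_univ_of_forall fun v => by_contra fun hv => ?_
  obtain ⟨p⟩ := hG x v
  obtain ⟨d, -, hd, hdX⟩ := p.exists_boundary_dart X hx hv
  exact h _ hdX _ hd d.adj.symm

lemma IsHomogeneous.image (e : G ≃g H) (hX : IsHomogeneous G X) : IsHomogeneous H (e '' X) := by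
  intro w hw
  have hv : e.symm w ∉ X := fun h => hw ⟨_, h, e.apply_symm_apply w⟩
  rcases hX _ hv with h | h
  · exact Or.inl <| by
      rintro _ ⟨x, hx, rfl⟩
      simpa using e.map_adj_iff.mpr (h x hx)
  · exact Or.inr <| by
      rintro _ ⟨x, hx, rfl⟩ hadj
      exact h x hx (e.map_adj_iff.mp (by simpa using hadj))

lemma IsPrimeGraph.of_iso (e : G ≃g H) (hH : IsPrimeGraph H) : IsPrimeGraph G := by
  rintro ⟨X, hX2, hXne, hX⟩
  refine hH ⟨e '' X, ?_, ?_, hX.image e⟩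
  · rwa [Set.ncard_image_of_injective _ e.injective]
  · intro h
    refine hXne (Set.eq_univ_of_forall fun v => ?_)
    obtain ⟨x, hx, hxv⟩ := h.symm ▸ Set.mem_univ (e v)
    rwa [← e.injective hxv]

end Homogeneous

section UnitaryCayleyGraph

open SimpleGraph

variable {R S : Type*}

lemma cayleyGraph_units_adj [Ring R] {x y : R} :
    (cayleyGraph {x : R | IsUnit x}).Adj x y ↔ x ≠ y ∧ IsUnit (x - y) := by
  rw [cayleyGraph, fromRel_adj, Set.mem_ofPred_eq, Set.mem_ofPred_eq, ← neg_sub x y,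
    IsUnit.neg_iff, or_self]

def RingEquiv.cayleyGraphUnitsIso [Ring R] [Ring S] (e : R ≃+* S) :
    cayleyGraph {x : R | IsUnit x} ≃g cayleyGraph {x : S | IsUnit x} where
  toEquiv := e.toEquiv
  map_rel_iff' {x y} := by
    simp only [RingEquiv.toEquiv_eq_coe, EquivLike.coe_coe, cayleyGraph_units_adj, ← map_sub,
      ne_eq, EmbeddingLike.apply_eq_iff_eq, isUnit_map_iff]

lemma exists_ne_zero_not_isUnit_of_connected_compl [Ring R] [Nontrivial R]
    (h : (cayleyGraph {x : R | IsUnit x})ᶜ.Connected) : ∃ z : R, z ≠ 0 ∧ ¬ IsUnit z := by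
  by_contra! hunit
  have hbot : (cayleyGraph {x : R | IsUnit x})ᶜ = ⊥ := by
    ext x y
    simp only [compl_adj, cayleyGraph_units_adj, bot_adj]
    exact iff_false_intro fun ⟨hxy, hu⟩ => hu ⟨hxy, hunit _ (sub_ne_zero.mpr hxy)⟩
  exact not_connected_bot (hbot ▸ h)

lemma isUnit_sub_iff_of_isNilpotent [CommRing R] {t : R} (ht : IsNilpotent t) {v : R} :
    IsUnit (v - t) ↔ IsUnit v :=
  ⟨fun h => by simpa using ht.isUnit_add_left_of_commute h (Commute.all _ _),
    fun h => by simpa [sub_eq_add_neg] using ht.neg.isUnit_add_left_of_commute h (.all _ _)⟩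

lemma isHomogeneous_cayleyGraph_units_pair [CommRing R] {t : R} (ht : IsNilpotent t) :
    IsHomogeneous (cayleyGraph {x : R | IsUnit x}) {0, t} := by
  intro v hv
  simp only [Set.mem_insert_iff, Set.mem_singleton_iff, not_or] at hv
  simp only [Set.mem_insert_iff, Set.mem_singleton_iff, forall_eq_or_imp, forall_eq,
    cayleyGraph_units_adj, sub_zero, isUnit_sub_iff_of_isNilpotent ht, ne_eq, hv, not_false_eq_true,
    true_and, not_and]
  tauto

lemma not_isPrimeGraph_cayleyGraph_units_of_isNilpotent [CommRing R] [Nontrivial R] {t : R}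
    (ht : IsNilpotent t) (ht0 : t ≠ 0) : ¬ IsPrimeGraph (cayleyGraph {x : R | IsUnit x}) := by
  refine fun hprime => hprime ⟨{0, t}, (Set.ncard_pair ht0.symm).ge, fun h => ?_,
    isHomogeneous_cayleyGraph_units_pair ht⟩
  have h1 : (1 : R) ∈ ({0, t} : Set R) := h ▸ Set.mem_univ 1
  rcases h1 with h1 | h1
  · exact one_ne_zero h1
  · exact ht.not_isUnit (h1 ▸ isUnit_one)

end UnitaryCayleyGraph

section ProductOfFields

variable {ι : Type*} {F : ι → Type*} [∀ i, DivisionRing (F i)]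

lemma cayleyGraph_units_pi_adj [Nonempty ι] {x y : Π i, F i} :
    (cayleyGraph {x : Π i, F i | IsUnit x}).Adj x y ↔ ∀ i, x i ≠ y i := by
  rw [cayleyGraph_units_adj, Pi.isUnit_iff]
  simp only [Pi.sub_apply, isUnit_iff_ne_zero, sub_ne_zero, and_iff_right_iff_imp]
  exact fun h heq => h (Classical.arbitrary ι) (congrFun heq _)

theorem isPrimeGraph_cayleyGraph_units_pi {i j : ι} (hij : i ≠ j)
    (hconn : (cayleyGraph {x : Π i, F i | IsUnit x}).Preconnected) :
    IsPrimeGraph (cayleyGraph {x : Π i, F i | IsUnit x}) := by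
  classical
  have : Nonempty ι := ⟨i⟩
  rintro ⟨X, hX2, hXne, hX⟩
  obtain ⟨a, ha, d, hd, had⟩ := (Set.one_lt_ncard (Set.finite_of_ncard_pos (by omega))).mp hX2
  obtain ⟨k, hk⟩ := Function.ne_iff.mp had
  set c := Function.update (a + 1) k (d k)
  have hca : ∀ l, c l ≠ a l := by
    intro l
    by_cases hl : l = k
    · subst hl; simpa [c] using hk.symm
    · simp [c, hl]
  have hc : c ∈ X := hX.mem_of_adj_of_not_adj ha hd (cayleyGraph_units_pi_adj.mpr hca)
    fun h => cayleyGraph_units_pi_adj.mp h k (by simp [c])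
  have hnbr : ∀ u, (cayleyGraph {x : Π i, F i | IsUnit x}).Adj u a → u ∈ X := by
    intro u hu
    rw [cayleyGraph_units_pi_adj] at hu
    set b := Function.update c i (u i)
    have hba : ∀ l, b l ≠ a l := by
      intro l
      by_cases hl : l = i
      · subst hl; simpa [b] using hu l
      · simpa [b, hl] using hca l
    have hb : b ∈ X := hX.mem_of_adj_of_not_adj ha hc (cayleyGraph_units_pi_adj.mpr hba)
      fun h => cayleyGraph_units_pi_adj.mp h j (by simp [b, hij.symm])
    exact hX.mem_of_adj_of_not_adj ha hb (cayleyGraph_units_pi_adj.mpr hu)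
      fun h => cayleyGraph_units_pi_adj.mp h i (by simp [b])
  refine hXne (hconn.eq_univ_of_forall_not_adj ha fun v hv x hx hvx => ?_)
  rcases hX v hv with h | h
  · exact hv (hnbr v (h a ha))
  · exact h x hx hvx

end ProductOfFields

theorem isPrimeGraph_cayleyGraph_units_of_isReduced {R : Type*} [CommRing R] [Finite R]
    [IsReduced R] [Nontrivial R] (hconn : (cayleyGraph {x : R | IsUnit x}).Connected)
    (hanti : (cayleyGraph {x : R | IsUnit x})ᶜ.Connected) :
    IsPrimeGraph (cayleyGraph {x : R | IsUnit x}) := by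
  let _ (I : MaximalSpectrum R) : Field (R ⧸ I.asIdeal) := Ideal.Quotient.field _
  let e := (IsArtinianRing.equivPi R).toRingEquiv
  let g := e.cayleyGraphUnitsIso
  obtain ⟨z, hz0, hzu⟩ := exists_ne_zero_not_isUnit_of_connected_compl hanti
  obtain ⟨j, hj⟩ : ∃ j, e z j ≠ 0 := Function.ne_iff.mp ((map_ne_zero_iff e e.injective).mpr hz0)
  obtain ⟨i, hi⟩ : ∃ i, e z i = 0 := by
    have hezu : ¬ IsUnit (e z) := (isUnit_map_iff e z).not.mpr hzu
    simpa only [Pi.isUnit_iff, isUnit_iff_ne_zero, not_forall, not_not] using hezu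
  have hij : i ≠ j := fun h => hj (h ▸ hi)
  exact (isPrimeGraph_cayleyGraph_units_pi hij (g.connected_iff.mp hconn).preconnected).of_iso g

namespace AddChar

lemma map_finset_sum {A M ι : Type*} [AddCommMonoid A] [CommMonoid M] (ψ : AddChar A M)
    (s : Finset ι) (f : ι → A) : ψ (∑ i ∈ s, f i) = ∏ i ∈ s, ψ (f i) := by
  induction s using Finset.cons_induction with
  | empty => simp
  | cons i s hi ih => rw [Finset.sum_cons, Finset.prod_cons, map_add_eq_mul, ih]

lemma sum_units_ne_zero_of_field {F : Type*} [Field F] [Fintype F] [DecidableEq F]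
    (ψ : AddChar F ℂ) : ∑ u : Fˣ, ψ u ≠ 0 := by
  by_cases hψ : ψ = 0
  · simp [hψ]
  · have hsplit : ∑ u : Fˣ, ψ u + ψ 0 = ∑ x, ψ x := by
      rw [← Finset.sum_erase_add _ _ (Finset.mem_univ (0 : F)),
        Finset.sum_subtype (Finset.univ.erase 0) (p := (· ≠ (0 : F))) (by simp)]
      exact congrArg (· + ψ 0) (Fintype.sum_equiv unitsEquivNeZero _ _ fun _ => rfl)
    rw [sum_eq_zero_iff_ne_zero.mpr hψ, map_zero_eq_one] at hsplit
    rw [eq_neg_of_add_eq_zero_left hsplit]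
    exact neg_ne_zero.mpr one_ne_zero

lemma sum_units_pi_ne_zero {ι : Type*} [Fintype ι] [DecidableEq ι] {F : ι → Type*}
    [∀ i, Field (F i)] [∀ i, Fintype (F i)] [∀ i, DecidableEq (F i)]
    (ψ : AddChar (Π i, F i) ℂ) : ∑ u : (Π i, F i)ˣ, ψ u ≠ 0 := by
  let ψi (i : ι) : AddChar (F i) ℂ := ψ.compAddMonoidHom (AddMonoidHom.single F i)
  have hψ (x : Π i, F i) : ψ x = ∏ i, ψi i (x i) := by
    conv_lhs => rw [← Finset.univ_sum_single x]
    exact ψ.map_finset_sum _ _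
  have hsum : ∑ u : (Π i, F i)ˣ, ψ u = ∏ i, ∑ u : (F i)ˣ, ψi i u := by
    rw [Finset.prod_univ_sum]
    exact Fintype.sum_equiv MulEquiv.piUnits.toEquiv _ _ fun u => hψ u
  rw [hsum]
  exact Finset.prod_ne_zero_iff.mpr fun i _ => (ψi i).sum_units_ne_zero_of_field

variable {R : Type*} [CommRing R] [Fintype R] [DecidableEq R]

lemma sum_units_eq_zero_of_isNilpotent (ψ : AddChar R ℂ) {t : R} (ht : IsNilpotent t)
    (hψt : ψ t ≠ 1) : ∑ u : Rˣ, ψ u = 0 := by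
  let f (u : Rˣ) : Rˣ := (ht.isUnit_add_left_of_commute u.isUnit (Commute.all _ _)).unit
  have hf : f.Bijective := Finite.injective_iff_bijective.mp fun u w h =>
    Units.ext (add_right_cancel (congrArg Units.val h))
  refine eq_zero_of_mul_eq_self_left hψt ?_
  rw [Finset.mul_sum]
  exact Fintype.sum_bijective f hf _ _ fun u => by simp [f, ← map_add_eq_mul, add_comm]

lemma sum_units_ne_zero_of_isReduced [IsReduced R] (ψ : AddChar R ℂ) : ∑ u : Rˣ, ψ u ≠ 0 := by
  classical
  let _ (I : MaximalSpectrum R) : Field (R ⧸ I.asIdeal) := Ideal.Quotient.field _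
  let _ := Fintype.ofFinite (MaximalSpectrum R)
  let _ (I : MaximalSpectrum R) : Fintype (R ⧸ I.asIdeal) := Fintype.ofFinite _
  let e := (IsArtinianRing.equivPi R).toRingEquiv
  have hsum : ∑ u : Rˣ, ψ u = ∑ v : (Π I : MaximalSpectrum R, R ⧸ I.asIdeal)ˣ,
      ψ.compAddMonoidHom e.symm.toAddMonoidHom v :=
    Fintype.sum_equiv (Units.mapEquiv e.toMulEquiv).toEquiv _ _ fun u => by simp
  rw [hsum]
  exact sum_units_pi_ne_zero _

end AddChar

lemma exists_sum_units_eq_zero_of_isNilpotent {R : Type*} [CommRing R] [Fintype R] [DecidableEq R]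
    (χ : AddChar R ℂ) (hnd : ∀ I : Ideal R, (∀ x ∈ I, χ x = 1) → I = ⊥) {t : R}
    (ht : IsNilpotent t) (ht0 : t ≠ 0) : ∃ r : R, ∑ u : Rˣ, χ (r * u) = 0 := by
  obtain ⟨c, hc⟩ : ∃ c, χ (c * t) ≠ 1 := by
    by_contra! h
    refine ht0 (Ideal.span_singleton_eq_bot.mp (hnd _ fun x hx => ?_))
    obtain ⟨c, rfl⟩ := Ideal.mem_span_singleton'.mp hx
    exact h c
  exact ⟨c, (χ.mulShift c).sum_units_eq_zero_of_isNilpotent ht hc⟩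

/-- Let `R` be a nontrivial finite commutative ring with a
non-degenerate additive character `χ`. Suppose the unitary Cayley graph `Γ(R,Rˣ)` is
connected and anti-connected. Then `Γ(R,Rˣ)` is prime iff `0` is not an eigenvalue of
`Γ(R,Rˣ)`, i.e. iff `Σ_{u∈Rˣ} χ(r·u) ≠ 0` for every `r ∈ R`. -/
theorem stmt16 {R : Type*} [CommRing R] [Fintype R] [DecidableEq R] [Nontrivial R]
    (χ : AddChar R ℂ)
    (hnd : ∀ I : Ideal R, (∀ x ∈ I, χ x = 1) → I = ⊥)
    (hconn : (cayleyGraph {x : R | IsUnit x}).Connected)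
    (hanti : ((cayleyGraph {x : R | IsUnit x})ᶜ).Connected) :
    IsPrimeGraph (cayleyGraph {x : R | IsUnit x}) ↔
      ∀ r : R, ∑ u : Rˣ, χ (r * (u : R)) ≠ 0 := by
  by_cases hR : IsReduced R
  · exact iff_of_true (isPrimeGraph_cayleyGraph_units_of_isReduced hconn hanti)
      fun r => (χ.mulShift r).sum_units_ne_zero_of_isReduced
  · obtain ⟨t, ht, ht0⟩ : ∃ t : R, IsNilpotent t ∧ t ≠ 0 := by
      simpa [isReduced_iff] using hR
    obtain ⟨r, hr⟩ := exists_sum_units_eq_zero_of_isNilpotent χ hnd ht ht0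
    exact iff_of_false (not_isPrimeGraph_cayleyGraph_units_of_isNilpotent ht ht0) fun h => h r hr
end

section
/- Let p be a prime and R a finite commutative ring of characteristic p (i.e. an 𝔽_p-algebra), and let U be a subgroup of Rˣ whose order is not divisible by p. Then: (1) for every additive character χ of R and every r ∈ R, the sum Σ_{u∈U} χ(r·u) is nonzero (so 0 is not an eigenvalue of the Cayley graph Γ(R,U)); (2) there is no nonzero ideal I of R with 1 + I ⊆ U. -/
open scoped Classical

/-- Let `p` be a prime and `R` a finite commutative ring of
characteristic `p`, and let `U` be a subgroup of `Rˣ` whose order is not divisible by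
`p`. Then: (1) for every additive character `χ` of `R` and every `r ∈ R`, the sum
`Σ_{u∈U} χ(r·u)` is nonzero (so `0` is not an eigenvalue of `Γ(R,U)`); (2) there is no
nonzero ideal `I` of `R` with `1 + I ⊆ U`. -/
theorem stmt18 {R : Type*} [CommRing R] [Fintype R]
    (p : ℕ) (hp : p.Prime) [CharP R p]
    (U : Subgroup Rˣ) (hU : ¬ p ∣ Nat.card U) :
    (∀ χ : AddChar R ℂ, ∀ r : R,
        ∑ u ∈ Finset.univ.filter (fun u : Rˣ => u ∈ U), χ (r * (u : R)) ≠ 0) ∧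
      ¬ ∃ I : Ideal R, I ≠ ⊥ ∧ ∀ m ∈ I, ∃ u ∈ U, (u : R) = 1 + m := by
  have hp1 : 1 < p := hp.one_lt
  have : NeZero p := ⟨hp.ne_zero⟩
  constructor
  · -- Part (1)
    intro χ r hS
    apply hU
    set F := Finset.univ.filter (fun u : Rˣ => u ∈ U) with hF
    -- each value is a p-th root of unity
    have hpow : ∀ u : Rˣ, (χ (r * (u : R))) ^ p = 1 := by
      intro u
      rw [← AddChar.map_nsmul_eq_pow, nsmul_eq_mul, CharP.cast_eq_zero R p, zero_mul,
        AddChar.map_zero_eq_one]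
    obtain ⟨ζ, hζ⟩ : ∃ ζ : ℂ, IsPrimitiveRoot ζ p :=
      ⟨Complex.exp (2 * Real.pi * Complex.I / p), Complex.isPrimitiveRoot_exp p hp.ne_zero⟩
    have hex : ∀ u : Rˣ, ∃ i < p, ζ ^ i = χ (r * (u : R)) := fun u =>
      hζ.eq_pow_of_pow_eq_one (hpow u)
    set g : Rˣ → ℕ := fun u => (hex u).choose with hg
    have hglt : ∀ u : Rˣ, g u < p := fun u => (hex u).choose_spec.1
    have hgval : ∀ u : Rˣ, ζ ^ g u = χ (r * (u : R)) := fun u => (hex u).choose_spec.2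
    have hmaps : ∀ u ∈ F, g u ∈ Finset.range p := fun u _ => Finset.mem_range.mpr (hglt u)
    set c : ℕ → ℕ := fun i => (F.filter (fun u => g u = i)).card with hc
    -- rewrite the sum fiberwise
    have hSc : ∑ i ∈ Finset.range p, (c i : ℂ) * ζ ^ i = 0 := by
      rw [← hS]
      rw [← Finset.sum_fiberwise_of_maps_to hmaps (fun u => χ (r * (u : R)))]
      refine Finset.sum_congr rfl fun i _ => ?_
      rw [hc]
      rw [Finset.sum_congr rfl (fun u hu => ?_), Finset.sum_const, nsmul_eq_mul]
      have := (Finset.mem_filter.mp hu).2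
      rw [← hgval u, this]
    have hcard : Nat.card U = ∑ i ∈ Finset.range p, c i := by
      rw [Nat.card_eq_fintype_card]
      rw [Fintype.card_subtype]
      exact Finset.card_eq_sum_card_fiberwise hmaps
    -- the polynomial
    set a : ℕ → ℚ := fun i => (c i : ℚ) - (c (p - 1) : ℚ) with ha
    set q : Polynomial ℚ :=
      ∑ i ∈ Finset.range (p - 1), Polynomial.C (a i) * Polynomial.X ^ i with hqdef
    have hq0 : Polynomial.aeval ζ q = 0 := by
      have hgeom : ∑ i ∈ Finset.range p, ζ ^ i = 0 := hζ.geom_sum_eq_zero hp1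
      have : Polynomial.aeval ζ q =
          ∑ i ∈ Finset.range (p - 1), ((c i : ℂ) - (c (p - 1) : ℂ)) * ζ ^ i := by
        rw [hqdef, map_sum]
        refine Finset.sum_congr rfl fun i _ => ?_
        simp [ha]
      rw [this]
      have hsucc : p - 1 + 1 = p := Nat.succ_pred_eq_of_pos hp.pos
      have hext : ∑ i ∈ Finset.range (p - 1), ((c i : ℂ) - (c (p - 1) : ℂ)) * ζ ^ i =
          ∑ i ∈ Finset.range p, ((c i : ℂ) - (c (p - 1) : ℂ)) * ζ ^ i := by
        rw [← hsucc, Finset.sum_range_succ]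
        simp
      rw [hext]
      have : ∑ i ∈ Finset.range p, ((c i : ℂ) - (c (p - 1) : ℂ)) * ζ ^ i =
          (∑ i ∈ Finset.range p, (c i : ℂ) * ζ ^ i) -
            (c (p - 1) : ℂ) * ∑ i ∈ Finset.range p, ζ ^ i := by
        rw [Finset.mul_sum, ← Finset.sum_sub_distrib]
        refine Finset.sum_congr rfl fun i _ => by ring
      rw [this, hSc, hgeom, mul_zero, sub_zero]
    have hq : q = 0 := by
      by_contra hne
      have hdeg := minpoly.degree_le_of_ne_zero ℚ ζ hne hq0
      have hmin : minpoly ℚ ζ = Polynomial.cyclotomic p ℚ :=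
        (Polynomial.cyclotomic_eq_minpoly_rat hζ hp.pos).symm
      rw [hmin, Polynomial.degree_cyclotomic, Nat.totient_prime hp] at hdeg
      have hdq : q.degree < ((p - 1 : ℕ) : WithBot ℕ) := by
        refine lt_of_le_of_lt (Polynomial.degree_sum_le _ _) ?_
        rw [Finset.sup_lt_iff (by exact_mod_cast WithBot.bot_lt_coe (p - 1))]
        intro i hi
        refine lt_of_le_of_lt (Polynomial.degree_C_mul_X_pow_le _ _) ?_
        exact_mod_cast Finset.mem_range.mp hi
      exact hdq.not_ge hdeg
    have hceq : ∀ i < p - 1, c i = c (p - 1) := by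
      intro i hi
      have h1 := congrArg (fun f => Polynomial.coeff f i) hq
      simp only [hqdef, Polynomial.finset_sum_coeff, Polynomial.coeff_C_mul,
        Polynomial.coeff_X_pow, Polynomial.coeff_zero, mul_ite, mul_one, mul_zero] at h1
      rw [Finset.sum_ite_eq (Finset.range (p - 1)) i a] at h1
      rw [if_pos (Finset.mem_range.mpr hi)] at h1
      have : (c i : ℚ) = (c (p - 1) : ℚ) := by
        have := sub_eq_zero.mp h1
        exact_mod_cast this
      exact_mod_cast this
    have hall : ∀ i ∈ Finset.range p, c i = c (p - 1) := by
      intro i hi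
      rcases eq_or_ne i (p - 1) with h | h
      · rw [h]
      · exact hceq i (by have := Finset.mem_range.mp hi; omega)
    rw [hcard, Finset.sum_congr rfl hall, Finset.sum_const, Finset.card_range, smul_eq_mul]
    exact Dvd.intro _ rfl
  · -- Part (2)
    rintro ⟨I, hI0, hIU⟩
    apply hU
    -- the subgroup 1 + I
    set H : Subgroup Rˣ :=
      { carrier := {u : Rˣ | (u : R) - 1 ∈ I}
        one_mem' := by simp
        mul_mem' := by
          intro a b ha hb
          have key : ((a * b : Rˣ) : R) - 1 =
              ((a : R) - 1) * ((b : R) - 1) + ((a : R) - 1) + ((b : R) - 1) := by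
            push_cast; ring
          show ((a * b : Rˣ) : R) - 1 ∈ I
          rw [key]
          exact add_mem (add_mem (I.mul_mem_right _ ha) ha) hb
        inv_mem' := by
          intro a ha
          show ((a⁻¹ : Rˣ) : R) - 1 ∈ I
          have h1 : ((a⁻¹ : Rˣ) : R) * (a : R) = 1 := Units.inv_mul a
          have key : ((a⁻¹ : Rˣ) : R) - 1 = ((a⁻¹ : Rˣ) : R) * -((a : R) - 1) := by
            rw [mul_neg, mul_sub, h1, mul_one, neg_sub]
          rw [key]
          exact I.mul_mem_left _ (neg_mem ha) } with hH
    have hHU : H ≤ U := by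
      intro u hu
      obtain ⟨v, hv, hveq⟩ := hIU _ hu
      have : v = u := Units.ext (by rw [hveq]; ring)
      rwa [← this]
    -- the map H → I is a bijection
    have hbij : Function.Bijective (fun u : H => (⟨(u : Rˣ) - 1, u.2⟩ : I)) := by
      constructor
      · intro u v huv
        have h1 : ((u : Rˣ) : R) - 1 = ((v : Rˣ) : R) - 1 := congrArg Subtype.val huv
        exact Subtype.ext (Units.ext (by linear_combination h1))
      · rintro ⟨m, hm⟩
        obtain ⟨v, hv, hveq⟩ := hIU m hm
        have hvH : v ∈ H := by show (v : R) - 1 ∈ I; rw [hveq]; simpa using hm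
        exact ⟨⟨v, hvH⟩, Subtype.ext (by simp [hveq])⟩
    have hcardHI : Nat.card H = Nat.card I := Nat.card_eq_of_bijective _ hbij
    -- p divides card I
    obtain ⟨m, hm, hm0⟩ := Submodule.exists_mem_ne_zero_of_ne_bot hI0
    set x : I := ⟨m, hm⟩ with hx
    have hx0 : x ≠ 0 := fun h => hm0 (congrArg Subtype.val h)
    have hxp : p • x = 0 := by
      apply Subtype.ext
      show p • m = (0 : R)
      rw [nsmul_eq_mul, CharP.cast_eq_zero R p, zero_mul]
    have hord : addOrderOf x ∣ p := addOrderOf_dvd_iff_nsmul_eq_zero.mpr hxp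
    have hordp : addOrderOf x = p := by
      rcases (Nat.Prime.eq_one_or_self_of_dvd hp _ hord) with h | h
      · exact absurd (AddMonoid.addOrderOf_eq_one_iff.mp h) hx0
      · exact h
    have hdvdI : p ∣ Nat.card I := hordp ▸ addOrderOf_dvd_natCard x
    calc p ∣ Nat.card H := hcardHI ▸ hdvdI
      _ ∣ Nat.card U := Subgroup.card_dvd_of_le hHU
end

section
/- Let R be a finite commutative ring, φ an additive character of R, and ρ a multiplicative character of R (a homomorphism from Rˣ to the nonzero complex numbers, extended to all of R by setting ρ(a) = 0 for non-units a) such that ρ(u)^d = 1 for every unit u, where d is a positive integer. Then Σ_{u ∈ Rˣ, ρ(u)=1} φ(u) = (1/d) · Σ_{i=1}^{d} τ(ρ^i, φ), where τ(ρ^i, φ) = Σ_{r∈R} ρ(r)^i · φ(r) is the Gauss sum of ρ^i and φ. In other words, the generalized Ramanujan sum c(R, ker(ρ), φ) equals the average of the Gauss sums τ(ρ^i, φ) for 1 ≤ i ≤ d. -/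
open scoped Classical

lemma geom_icc {d : ℕ} (hd : 0 < d) (z : ℂ) (hz : z ^ d = 1) :
    ∑ i ∈ Finset.Icc 1 d, z ^ i = if z = 1 then (d : ℂ) else 0 := by
  have h : Finset.Icc 1 d = Finset.Ioc 0 d := rfl
  split_ifs with h1
  · subst h1; simp
  · have : ∑ i ∈ Finset.Icc 1 d, z ^ i = z * ∑ i ∈ Finset.range d, z ^ i := by
      rw [Finset.mul_sum]
      rw [show Finset.Icc 1 d = Finset.map ⟨Nat.succ, Nat.succ_injective⟩ (Finset.range d) by
        ext x
        simp only [Finset.mem_Icc, Finset.mem_map, Finset.mem_range,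
          Function.Embedding.coeFn_mk]
        constructor
        · rintro ⟨h1, h2⟩; exact ⟨x - 1, by omega, by omega⟩
        · rintro ⟨a, ha, rfl⟩; omega]
      rw [Finset.sum_map]
      simp [pow_succ, mul_comm]
    rw [this, geom_sum_eq h1, hz]
    simp

/-- Let `R` be a finite commutative ring, `φ` an additive character,
and `ρ` a multiplicative character of `R` (a homomorphism `Rˣ → ℂ*`, extended to `R` by
`ρ(a) = 0` for non-units, here called `ρe`) with `ρ(u)^d = 1` for every unit `u`, `d` a
positive integer. Then `Σ_{u∈Rˣ, ρ(u)=1} φ(u) = (1/d) · Σ_{i=1}^d τ(ρ^i, φ)`, where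
`τ(ρ^i, φ) = Σ_{r∈R} ρ(r)^i·φ(r)`: the generalized Ramanujan sum `c(R, ker ρ, φ)` is the
average of the Gauss sums `τ(ρ^i, φ)` for `1 ≤ i ≤ d`. -/
theorem stmt19 {R : Type*} [CommRing R] [Fintype R]
    (φ : AddChar R ℂ) (ρ : Rˣ →* ℂ) (ρe : R → ℂ)
    (hρe : ∀ u : Rˣ, ρe (u : R) = ρ u)
    (hρe0 : ∀ a : R, ¬ IsUnit a → ρe a = 0)
    (d : ℕ) (hd : 0 < d) (hord : ∀ u : Rˣ, ρ u ^ d = 1) :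
    ∑ u ∈ Finset.univ.filter (fun u : Rˣ => ρ u = 1), φ ((u : R)) =
      (1 / (d : ℂ)) * ∑ i ∈ Finset.Icc 1 d, ∑ r : R, (ρe r) ^ i * φ r := by
  have hdne : (d : ℂ) ≠ 0 := Nat.cast_ne_zero.mpr hd.ne'
  have key : ∑ i ∈ Finset.Icc 1 d, ∑ r : R, (ρe r) ^ i * φ r =
      (d : ℂ) * ∑ u ∈ Finset.univ.filter (fun u : Rˣ => ρ u = 1), φ ((u : R)) := by
    rw [Finset.sum_comm]
    have hstep : ∀ r : R, ∑ i ∈ Finset.Icc 1 d, (ρe r) ^ i * φ r =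
        (∑ i ∈ Finset.Icc 1 d, (ρe r) ^ i) * φ r := fun r => (Finset.sum_mul ..).symm
    simp_rw [hstep]
    -- restrict to units
    have himage : ∑ r : R, (∑ i ∈ Finset.Icc 1 d, (ρe r) ^ i) * φ r =
        ∑ u : Rˣ, (∑ i ∈ Finset.Icc 1 d, (ρe (u : R)) ^ i) * φ (u : R) := by
      rw [← Finset.sum_image (s := (Finset.univ : Finset Rˣ))
        (g := fun u : Rˣ => (u : R))
        (f := fun r : R => (∑ i ∈ Finset.Icc 1 d, (ρe r) ^ i) * φ r)
        (fun a _ b _ h => Units.ext h)]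
      refine (Finset.sum_subset (Finset.subset_univ _) ?_).symm
      intro x _ hx
      have hnu : ¬ IsUnit x := by
        intro ⟨u, hu⟩
        exact hx (Finset.mem_image.mpr ⟨u, Finset.mem_univ u, hu⟩)
      have : ρe x = 0 := hρe0 x hnu
      rw [this]
      have : ∑ i ∈ Finset.Icc 1 d, (0 : ℂ) ^ i = 0 := by
        apply Finset.sum_eq_zero
        intro i hi
        exact zero_pow (by simp at hi; omega)
      rw [this, zero_mul]
    rw [himage]
    have : ∀ u : Rˣ, (∑ i ∈ Finset.Icc 1 d, (ρe (u : R)) ^ i) * φ (u : R) =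
        (if ρ u = 1 then (d : ℂ) else 0) * φ (u : R) := by
      intro u
      rw [hρe u, geom_icc hd _ (hord u)]
    simp_rw [this, ite_mul, zero_mul, Finset.mul_sum]
    rw [Finset.sum_filter]
  rw [key]
  field_simp
end
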